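/- Let X_1, X_2, … be i.i.d. according to P_X, and consider any sequence of rate-distortion codes of rate at most R: encoders f_n : 𝒳^n → ℳ_n with |ℳ_n| ≤ 2^{nR} and decoders g_n : ℳ_n → 𝒴^n, with Y^n = g_n(f_n(X^n)). Then limsup_{n→∞} I(T_{X^n Y^n}) ≤ R almost surely, where T_{X^n Y^n} is the empirical joint distribution (joint type) of (X^n, Y^n) and I(Q) denotes the mutual information of a joint pmf Q on 𝒳 × 𝒴. -/

import Mathlib

open scoped BigOperators
open Classical Filter MeasureTheory ProbabilityTheory

def IsPMF {A : Type*} [Fintype A] (p : A → ℝ) : Prop :=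
  (∀ a, 0 ≤ p a) ∧ ∑ a, p a = 1

noncomputable def mutualInfo {A B : Type*} [Fintype A] [Fintype B] (q : A × B → ℝ) : ℝ :=
  ∑ p : A × B, q p * Real.logb 2 (q p / ((∑ b, q (p.1, b)) * (∑ a, q (a, p.2))))

/-- Empirical joint distribution (joint type) of a pair of sequences. -/
noncomputable def jointType {X Y : Type*} [Fintype X] [Fintype Y] {n : ℕ}
    (x : Fin n → X) (y : Fin n → Y) : X × Y → ℝ :=
  fun ab => ((Finset.univ.filter (fun i => x i = ab.1 ∧ y i = ab.2)).card : ℝ) / n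

lemma gibbs {A : Type*} [Fintype A] {p q : A → ℝ} (hp0 : ∀ a, 0 ≤ p a)
    (hp1 : ∑ a, p a = 1) (hq0 : ∀ a, 0 ≤ q a) (hq1 : ∑ a, q a ≤ 1)
    (hpq : ∀ a, p a ≠ 0 → q a ≠ 0) :
    0 ≤ ∑ a, p a * Real.logb 2 (p a / q a) := by
  have hlog2 : (0:ℝ) < Real.log 2 := Real.log_pos one_lt_two
  have key : ∀ a, (p a - q a) / Real.log 2 ≤ p a * Real.logb 2 (p a / q a) := by
    intro a
    by_cases hpa : p a = 0
    · simp only [hpa, zero_mul, zero_sub]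
      apply div_nonpos_of_nonpos_of_nonneg (by linarith [hq0 a]) hlog2.le
    · have hp' : 0 < p a := (hp0 a).lt_of_ne (Ne.symm hpa)
      have hq' : 0 < q a := (hq0 a).lt_of_ne (Ne.symm (hpq a hpa))
      have h1 : Real.log (q a / p a) ≤ q a / p a - 1 :=
        Real.log_le_sub_one_of_pos (by positivity)
      have h2 : Real.log (p a / q a) = - Real.log (q a / p a) := by
        rw [← Real.log_inv, inv_div]
      have hc : p a * (q a / p a) = q a := by field_simp
      have h4 := mul_le_mul_of_nonneg_left h1 hp'.le
      have h3 : p a - q a ≤ p a * Real.log (p a / q a) := by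
        rw [h2]; nlinarith [h4, hc]
      rw [Real.logb, ← mul_div_assoc]
      gcongr
  calc (0:ℝ) ≤ (1 - ∑ a, q a) / Real.log 2 := div_nonneg (by linarith) hlog2.le
    _ = ∑ a, (p a - q a) / Real.log 2 := by
        rw [← Finset.sum_div, Finset.sum_sub_distrib, hp1]
    _ ≤ _ := Finset.sum_le_sum fun a _ => key a

section JT
variable {X Y : Type*} [Fintype X] [Fintype Y] {n : ℕ}

lemma filter_pair_eq (x : Fin n → X) (y : Fin n → Y) (ab : X × Y) :
    Finset.univ.filter (fun i => x i = ab.1 ∧ y i = ab.2)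
      = Finset.univ.filter (fun i => (x i, y i) = ab) := by
  apply Finset.filter_congr; intro i _; simp [Prod.ext_iff]

lemma jointType_nonneg (x : Fin n → X) (y : Fin n → Y) (ab : X × Y) :
    0 ≤ jointType x y ab := by
  unfold jointType; positivity

lemma sum_jointType (hn : n ≠ 0) (x : Fin n → X) (y : Fin n → Y) :
    ∑ ab : X × Y, jointType x y ab = 1 := by
  unfold jointType
  rw [← Finset.sum_div]
  rw [div_eq_one_iff_eq (by exact_mod_cast hn)]
  have hcard := Finset.card_eq_sum_card_fiberwise
    (f := fun i : Fin n => (x i, y i)) (s := Finset.univ) (t := Finset.univ)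
    (fun i _ => Finset.mem_univ _)
  rw [Finset.card_univ, Fintype.card_fin] at hcard
  have h2 : ∑ ab : X × Y,
      (Finset.univ.filter (fun i => x i = ab.1 ∧ y i = ab.2)).card = n := by
    rw [Finset.sum_congr rfl fun ab _ => congrArg Finset.card (filter_pair_eq x y ab)]
    exact hcard.symm
  exact_mod_cast h2

lemma isPMF_jointType (hn : n ≠ 0) (x : Fin n → X) (y : Fin n → Y) :
    IsPMF (jointType x y) :=
  ⟨jointType_nonneg x y, sum_jointType hn x y⟩

lemma mutualInfo_nonneg {q : X × Y → ℝ} (h : IsPMF q) : 0 ≤ mutualInfo q := by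
  obtain ⟨h0, h1⟩ := h
  have hs : ∑ ab : X × Y, (∑ b, q (ab.1, b)) * (∑ a, q (a, ab.2)) ≤ 1 := by
    rw [Fintype.sum_prod_type]
    have : ∀ a : X, ∑ b : Y, (∑ b', q (a, b')) * (∑ a', q (a', b))
        = (∑ b', q (a, b')) * ∑ b : Y, (∑ a', q (a', b)) := fun a => by
      rw [Finset.mul_sum]
    rw [Finset.sum_congr rfl fun a _ => this a, ← Finset.sum_mul]
    have e1 : ∑ a : X, ∑ b : Y, q (a, b) = 1 := by rw [← Fintype.sum_prod_type, h1]
    have e2 : ∑ b : Y, ∑ a : X, q (a, b) = 1 := by rw [Finset.sum_comm]; exact e1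
    rw [e1, e2, one_mul]
  exact gibbs h0 h1
    (fun ab => mul_nonneg (Finset.sum_nonneg fun b _ => h0 _) (Finset.sum_nonneg fun a _ => h0 _))
    hs
    (fun ab hab => by
      have h1' : 0 < ∑ b, q (ab.1, b) :=
        lt_of_lt_of_le ((h0 ab).lt_of_ne (Ne.symm hab))
          (Finset.single_le_sum (f := fun b => q (ab.1, b)) (fun b _ => h0 _) (Finset.mem_univ ab.2))
      have h2' : 0 < ∑ a, q (a, ab.2) :=
        lt_of_lt_of_le ((h0 ab).lt_of_ne (Ne.symm hab))
          (Finset.single_le_sum (f := fun a => q (a, ab.2)) (fun a _ => h0 _) (Finset.mem_univ ab.1))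
      positivity)

lemma mutualInfo_jointType_nonneg (x : Fin n → X) (y : Fin n → Y) :
    0 ≤ mutualInfo (jointType x y) := by
  rcases Nat.eq_zero_or_pos n with hn | hn
  · subst hn
    have : jointType x y = fun _ => 0 := by
      funext ab; unfold jointType; simp
    rw [this]; unfold mutualInfo; simp
  · exact mutualInfo_nonneg (isPMF_jointType hn.ne' x y)

lemma sum_eval (x : Fin n → X) (y : Fin n → Y) (F : X × Y → ℝ) :
    ∑ i, F (x i, y i) =
      ∑ ab : X × Y,
        ((Finset.univ.filter (fun i => x i = ab.1 ∧ y i = ab.2)).card : ℝ) * F ab := by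
  calc ∑ i, F (x i, y i)
      = ∑ ab ∈ (Finset.univ : Finset (Fin n)).image (fun i => (x i, y i)),
          (Finset.univ.filter (fun i : Fin n => (x i, y i) = ab)).card • F ab :=
        Finset.sum_comp (s := Finset.univ) F (fun i : Fin n => (x i, y i))
    _ = ∑ ab : X × Y,
          (Finset.univ.filter (fun i : Fin n => (x i, y i) = ab)).card • F ab := by
        apply Finset.sum_subset (Finset.subset_univ _)
        intro ab _ hab
        have : Finset.univ.filter (fun i : Fin n => (x i, y i) = ab) = ∅ := by
          rw [Finset.filter_eq_empty_iff]
          intro i _ hi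
          exact hab (Finset.mem_image.2 ⟨i, Finset.mem_univ _, hi⟩)
        rw [this]; simp
    _ = _ := Finset.sum_congr rfl fun ab _ => by
        rw [filter_pair_eq, nsmul_eq_mul]

lemma prod_eq_two_rpow {ι : Type*} (s : Finset ι) (F : ι → ℝ) (h : ∀ i ∈ s, 0 < F i) :
    ∏ i ∈ s, F i = (2:ℝ) ^ (∑ i ∈ s, Real.logb 2 (F i)) := by
  rw [Finset.prod_congr rfl fun i hi =>
    (Real.rpow_logb two_pos (by norm_num) (h i hi)).symm]
  exact (Real.rpow_sum_of_pos two_pos _ _).symm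

noncomputable def margX (T : X × Y → ℝ) : X → ℝ := fun a => ∑ b, T (a, b)
noncomputable def margY (T : X × Y → ℝ) : Y → ℝ := fun b => ∑ a, T (a, b)

lemma mutualInfo_eq (T : X × Y → ℝ) :
    mutualInfo T = ∑ ab : X × Y,
      T ab * Real.logb 2 (T ab / (margX T ab.1 * margY T ab.2)) := rfl

lemma margX_nonneg {T : X × Y → ℝ} (h : ∀ ab, 0 ≤ T ab) (a : X) : 0 ≤ margX T a :=
  Finset.sum_nonneg fun b _ => h _

lemma margY_nonneg {T : X × Y → ℝ} (h : ∀ ab, 0 ≤ T ab) (b : Y) : 0 ≤ margY T b :=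
  Finset.sum_nonneg fun a _ => h _

lemma le_margX {T : X × Y → ℝ} (h : ∀ ab, 0 ≤ T ab) (ab : X × Y) : T ab ≤ margX T ab.1 :=
  Finset.single_le_sum (f := fun b => T (ab.1, b)) (fun b _ => h _) (Finset.mem_univ ab.2)

lemma le_margY {T : X × Y → ℝ} (h : ∀ ab, 0 ≤ T ab) (ab : X × Y) : T ab ≤ margY T ab.2 :=
  Finset.single_le_sum (f := fun a => T (a, ab.2)) (fun a _ => h _) (Finset.mem_univ ab.1)

lemma sum_margX {T : X × Y → ℝ} (h : ∑ ab, T ab = 1) : ∑ a, margX T a = 1 := by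
  unfold margX; rw [← Fintype.sum_prod_type]; exact h

lemma fiber_bound {n : ℕ} (hn : 0 < n) {P : X → ℝ} (hP : IsPMF P)
    (y : Fin n → Y) (x0 : Fin n → X) :
    ∑ x ∈ Finset.univ.filter
        (fun x : Fin n → X => jointType x y = jointType x0 y),
      ∏ i, P (x i) ≤ (2:ℝ) ^ (-(n:ℝ) * mutualInfo (jointType x0 y)) := by
  set T := jointType x0 y with hT
  have hT0 : ∀ ab, 0 ≤ T ab := jointType_nonneg x0 y
  have hTsum : ∑ ab, T ab = 1 := sum_jointType hn.ne' x0 y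
  have hpair_pos : ∀ (x : Fin n → X), jointType x y = T → ∀ i, 0 < T (x i, y i) := by
    intro x hx i
    rw [← hx]
    unfold jointType
    apply div_pos _ (by exact_mod_cast hn)
    have : i ∈ Finset.univ.filter (fun j => x j = x i ∧ y j = y i) :=
      Finset.mem_filter.2 ⟨Finset.mem_univ _, rfl, rfl⟩
    exact_mod_cast Finset.card_pos.2 ⟨i, this⟩
  have hTYpos : ∀ i, 0 < margY T (y i) :=
    fun i => lt_of_lt_of_le (hpair_pos x0 rfl i) (le_margY hT0 (x0 i, y i))
  have hcnt : ∀ (x : Fin n → X), jointType x y = T → ∀ ab : X × Y,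
      ((Finset.univ.filter (fun i => x i = ab.1 ∧ y i = ab.2)).card : ℝ) = n * T ab := by
    intro x hx ab
    have : T ab = ((Finset.univ.filter (fun i => x i = ab.1 ∧ y i = ab.2)).card : ℝ) / n := by
      rw [← hx]; rfl
    rw [this]
    field_simp
  by_cases hB : ∀ ab : X × Y, T ab ≠ 0 → P ab.1 ≠ 0
  · -- main case
    set J := ∑ ab : X × Y, T ab * Real.logb 2 (P ab.1 * margY T ab.2 / T ab) with hJ
    have hIneg : J ≤ -(mutualInfo T) := by
      have hJI : J + mutualInfo T = ∑ a, margX T a * Real.logb 2 (P a / margX T a) := by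
        rw [mutualInfo_eq, hJ, ← Finset.sum_add_distrib]
        have hRHS : ∑ a, margX T a * Real.logb 2 (P a / margX T a)
            = ∑ ab : X × Y, T ab * Real.logb 2 (P ab.1 / margX T ab.1) := by
          rw [Fintype.sum_prod_type]
          exact Finset.sum_congr rfl fun a _ => by
            simp only [margX]
            rw [Finset.sum_mul]
        rw [hRHS]
        apply Finset.sum_congr rfl
        intro ab _
        by_cases hab : T ab = 0
        · simp [hab]
        · have h1 : 0 < T ab := (hT0 ab).lt_of_ne (Ne.symm hab)
          have h2 : 0 < margX T ab.1 := lt_of_lt_of_le h1 (le_margX hT0 ab)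
          have h3 : 0 < margY T ab.2 := lt_of_lt_of_le h1 (le_margY hT0 ab)
          have h4 : 0 < P ab.1 := (hP.1 _).lt_of_ne (Ne.symm (hB ab hab))
          have harg : P ab.1 * margY T ab.2 / T ab * (T ab / (margX T ab.1 * margY T ab.2))
              = P ab.1 / margX T ab.1 := by
            field_simp
          rw [← mul_add, ← Real.logb_mul (by positivity) (by positivity), harg]
      have hD : 0 ≤ ∑ a, margX T a * Real.logb 2 (margX T a / P a) := by
        apply gibbs (margX_nonneg hT0) (sum_margX hTsum) hP.1 hP.2.le
        intro a ha hPa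
        apply ha
        unfold margX
        apply Finset.sum_eq_zero
        intro b _
        by_contra hTab
        exact hB (a, b) hTab hPa
      have hflip : ∑ a, margX T a * Real.logb 2 (P a / margX T a)
          = -∑ a, margX T a * Real.logb 2 (margX T a / P a) := by
        rw [← Finset.sum_neg_distrib]
        apply Finset.sum_congr rfl
        intro a _
        have h5 : P a / margX T a = (margX T a / P a)⁻¹ := (inv_div _ _).symm
        rw [h5, Real.logb_inv]
        ring
      linarith [hJI, hD, hflip]
    have key : ∀ x ∈ Finset.univ.filter (fun x : Fin n → X => jointType x y = T),
        ∏ i, P (x i)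
          = (∏ i, T (x i, y i) / margY T (y i)) * (2:ℝ) ^ ((n:ℝ) * J) := by
      intro x hx
      have hx' : jointType x y = T := (Finset.mem_filter.1 hx).2
      have hpos := hpair_pos x hx'
      have hPpos : ∀ i, 0 < P (x i) := fun i =>
        (hP.1 _).lt_of_ne (Ne.symm (hB (x i, y i) (hpos i).ne'))
      have h1 : ∏ i, (P (x i) * margY T (y i) / T (x i, y i)) = (2:ℝ) ^ ((n:ℝ) * J) := by
        rw [prod_eq_two_rpow _ _ (fun i _ => by
          have := hpos i; have := hTYpos i; have := hPpos i; positivity)]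
        congr 1
        have := sum_eval x y (fun ab => Real.logb 2 (P ab.1 * margY T ab.2 / T ab))
        rw [this]
        rw [Finset.sum_congr rfl fun ab _ => by rw [hcnt x hx' ab]]
        rw [hJ, Finset.mul_sum]
        exact Finset.sum_congr rfl fun ab _ => by ring
      rw [← h1, ← Finset.prod_mul_distrib]
      apply Finset.prod_congr rfl
      intro i _
      have h2 := (hpos i).ne'
      have h3 := (hTYpos i).ne'
      field_simp
    have hW : ∑ x ∈ Finset.univ.filter (fun x : Fin n → X => jointType x y = T),
        ∏ i, T (x i, y i) / margY T (y i) ≤ 1 := by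
      have step1 : ∑ x ∈ Finset.univ.filter (fun x : Fin n → X => jointType x y = T),
          ∏ i, T (x i, y i) / margY T (y i)
            ≤ ∑ x : Fin n → X, ∏ i, T (x i, y i) / margY T (y i) := by
        apply Finset.sum_le_sum_of_subset_of_nonneg (Finset.filter_subset _ _)
        intro x _ _
        exact Finset.prod_nonneg fun i _ => div_nonneg (hT0 _) (margY_nonneg hT0 _)
      have step2 : ∑ x : Fin n → X, ∏ i, T (x i, y i) / margY T (y i) = 1 := by
        have hps := Finset.prod_univ_sum (t := fun _ : Fin n => (Finset.univ : Finset X))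
          (f := fun i a => T (a, y i) / margY T (y i))
        rw [Fintype.piFinset_univ] at hps
        rw [← hps]
        have : ∀ i : Fin n, ∑ a, T (a, y i) / margY T (y i) = 1 := fun i => by
          rw [← Finset.sum_div]
          exact div_self (hTYpos i).ne'
        rw [Finset.prod_congr rfl fun i _ => this i, Finset.prod_const_one]
      linarith
    calc ∑ x ∈ Finset.univ.filter (fun x : Fin n → X => jointType x y = T), ∏ i, P (x i)
        = ∑ x ∈ Finset.univ.filter (fun x : Fin n → X => jointType x y = T),
            (∏ i, T (x i, y i) / margY T (y i)) * (2:ℝ) ^ ((n:ℝ) * J) :=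
          Finset.sum_congr rfl key
      _ = (∑ x ∈ Finset.univ.filter (fun x : Fin n → X => jointType x y = T),
            ∏ i, T (x i, y i) / margY T (y i)) * (2:ℝ) ^ ((n:ℝ) * J) :=
          (Finset.sum_mul _ _ _).symm
      _ ≤ 1 * (2:ℝ) ^ ((n:ℝ) * J) :=
          mul_le_mul_of_nonneg_right hW (Real.rpow_nonneg (by norm_num) _)
      _ = (2:ℝ) ^ ((n:ℝ) * J) := one_mul _
      _ ≤ (2:ℝ) ^ (-(n:ℝ) * mutualInfo T) := by
          apply Real.rpow_le_rpow_of_exponent_le one_le_two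
          have hn0 : (0:ℝ) ≤ n := Nat.cast_nonneg n
          nlinarith [hIneg]
  · -- degenerate case: some letter with positive type mass has zero probability
    push_neg at hB
    obtain ⟨ab, hab, hPa⟩ := hB
    have hzero : ∀ x ∈ Finset.univ.filter (fun x : Fin n → X => jointType x y = T),
        ∏ i, P (x i) = 0 := by
      intro x hx
      have hx' : jointType x y = T := (Finset.mem_filter.1 hx).2
      have hcard : (Finset.univ.filter (fun i => x i = ab.1 ∧ y i = ab.2)).card ≠ 0 := by
        intro h0
        apply hab
        have := hcnt x hx' ab
        rw [h0] at this
        simp at this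
        rcases this with h | h
        · exact absurd h (by exact_mod_cast hn.ne')
        · exact h
      obtain ⟨i, hi⟩ := Finset.card_pos.1 (Nat.pos_of_ne_zero hcard)
      have hi' := (Finset.mem_filter.1 hi).2
      exact Finset.prod_eq_zero (Finset.mem_univ i) (by rw [hi'.1, hPa])
    rw [Finset.sum_eq_zero hzero]
    exact Real.rpow_nonneg (by norm_num) _

lemma card_types_le {n : ℕ} (y : Fin n → Y) :
    (((Finset.univ : Finset (Fin n → X))).image (fun v => jointType v y)).card
      ≤ (n + 1) ^ (Fintype.card (X × Y)) := by
  set φ : (X × Y → Fin (n+1)) → (X × Y → ℝ) :=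
    fun c => fun ab => ((c ab : ℕ) : ℝ) / n with hφ
  set cfun : (Fin n → X) → (X × Y → Fin (n+1)) :=
    fun v ab => ⟨(Finset.univ.filter (fun i => v i = ab.1 ∧ y i = ab.2)).card,
      Nat.lt_succ_of_le (le_trans (Finset.card_filter_le _ _) (by simp))⟩ with hc
  have hfun : (fun v : Fin n → X => jointType v y) = φ ∘ cfun := by
    funext v; rfl
  calc ((Finset.univ : Finset (Fin n → X)).image (fun v => jointType v y)).card
      = (((Finset.univ : Finset (Fin n → X)).image cfun).image φ).card := by
        rw [hfun, ← Finset.image_image]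
    _ ≤ ((Finset.univ : Finset (Fin n → X)).image cfun).card := Finset.card_image_le
    _ ≤ Fintype.card (X × Y → Fin (n+1)) := Finset.card_le_univ _
    _ = (n + 1) ^ (Fintype.card (X × Y)) := by rw [Fintype.card_fun, Fintype.card_fin]

lemma code_bound {n : ℕ} (hn : 0 < n) {P : X → ℝ} (hP : IsPMF P)
    {M : ℕ} (g' : Fin M → Fin n → Y) (f' : (Fin n → X) → Fin M) (c : ℝ) :
    ∑ v ∈ Finset.univ.filter
        (fun v : Fin n → X => c < mutualInfo (jointType v (g' (f' v)))),
      ∏ i, P (v i)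
    ≤ (M : ℝ) * (((n:ℝ) + 1) ^ (Fintype.card (X × Y)) * (2:ℝ) ^ (-(n:ℝ) * c)) := by
  have hnn : ∀ v : Fin n → X, 0 ≤ ∏ i, P (v i) :=
    fun v => Finset.prod_nonneg fun i _ => hP.1 _
  have step2 : ∀ m : Fin M,
      ∑ v ∈ Finset.univ.filter
          (fun v : Fin n → X => c < mutualInfo (jointType v (g' m))),
        ∏ i, P (v i)
      ≤ ((n:ℝ) + 1) ^ (Fintype.card (X × Y)) * (2:ℝ) ^ (-(n:ℝ) * c) := by
    intro m
    set S := Finset.univ.filter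
      (fun v : Fin n → X => c < mutualInfo (jointType v (g' m))) with hS
    have hmaps : ∀ v ∈ S, jointType v (g' m) ∈ S.image (fun v => jointType v (g' m)) :=
      fun v hv => Finset.mem_image_of_mem _ hv
    rw [← Finset.sum_fiberwise_of_maps_to hmaps]
    have hinner : ∀ T ∈ S.image (fun v => jointType v (g' m)),
        ∑ v ∈ S.filter (fun v => jointType v (g' m) = T), ∏ i, P (v i)
          ≤ (2:ℝ) ^ (-(n:ℝ) * c) := by
      intro T hT
      obtain ⟨v0, hv0S, hv0⟩ := Finset.mem_image.1 hT
      have hv0c : c < mutualInfo (jointType v0 (g' m)) := (Finset.mem_filter.1 hv0S).2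
      have hsub : S.filter (fun v => jointType v (g' m) = T)
          ⊆ Finset.univ.filter (fun v : Fin n → X => jointType v (g' m) = jointType v0 (g' m)) := by
        intro v hv
        refine Finset.mem_filter.2 ⟨Finset.mem_univ _, ?_⟩
        rw [(Finset.mem_filter.1 hv).2, ← hv0]
      calc ∑ v ∈ S.filter (fun v => jointType v (g' m) = T), ∏ i, P (v i)
          ≤ ∑ v ∈ Finset.univ.filter
              (fun v : Fin n → X => jointType v (g' m) = jointType v0 (g' m)),
              ∏ i, P (v i) :=
            Finset.sum_le_sum_of_subset_of_nonneg hsub (fun v _ _ => hnn v)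
        _ ≤ (2:ℝ) ^ (-(n:ℝ) * mutualInfo (jointType v0 (g' m))) := fiber_bound hn hP _ _
        _ ≤ (2:ℝ) ^ (-(n:ℝ) * c) := by
            apply Real.rpow_le_rpow_of_exponent_le one_le_two
            have : (0:ℝ) ≤ n := Nat.cast_nonneg n
            nlinarith
    calc ∑ T ∈ S.image (fun v => jointType v (g' m)),
          ∑ v ∈ S.filter (fun v => jointType v (g' m) = T), ∏ i, P (v i)
        ≤ ∑ _T ∈ S.image (fun v => jointType v (g' m)), (2:ℝ) ^ (-(n:ℝ) * c) :=
          Finset.sum_le_sum hinner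
      _ = ((S.image (fun v => jointType v (g' m))).card : ℝ) * (2:ℝ) ^ (-(n:ℝ) * c) := by
          rw [Finset.sum_const, nsmul_eq_mul]
      _ ≤ ((n:ℝ) + 1) ^ (Fintype.card (X × Y)) * (2:ℝ) ^ (-(n:ℝ) * c) := by
          apply mul_le_mul_of_nonneg_right _ (Real.rpow_nonneg (by norm_num) _)
          have h1 : (S.image (fun v => jointType v (g' m))).card
              ≤ (n + 1) ^ (Fintype.card (X × Y)) := by
            exact le_trans (Finset.card_le_card
              (Finset.image_subset_image (Finset.subset_univ S))) (card_types_le (g' m))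
          calc ((S.image (fun v => jointType v (g' m))).card : ℝ)
              ≤ (((n + 1) ^ (Fintype.card (X × Y)) : ℕ) : ℝ) := by exact_mod_cast h1
            _ = ((n:ℝ) + 1) ^ (Fintype.card (X × Y)) := by push_cast; ring
  have step1 : ∑ v ∈ Finset.univ.filter
        (fun v : Fin n → X => c < mutualInfo (jointType v (g' (f' v)))),
      ∏ i, P (v i)
      ≤ ∑ m : Fin M, ∑ v ∈ Finset.univ.filter
          (fun v : Fin n → X => c < mutualInfo (jointType v (g' m))),
        ∏ i, P (v i) := by
    rw [Finset.sum_filter]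
    have hrw : ∀ m : Fin M, ∑ v ∈ Finset.univ.filter
          (fun v : Fin n → X => c < mutualInfo (jointType v (g' m))),
        ∏ i, P (v i)
        = ∑ v : Fin n → X,
            if c < mutualInfo (jointType v (g' m)) then ∏ i, P (v i) else 0 :=
      fun m => Finset.sum_filter _ _
    rw [Finset.sum_congr rfl fun m _ => hrw m, Finset.sum_comm]
    apply Finset.sum_le_sum
    intro v _
    by_cases hc : c < mutualInfo (jointType v (g' (f' v)))
    · rw [if_pos hc]
      calc ∏ i, P (v i)
          = (if c < mutualInfo (jointType v (g' (f' v))) then ∏ i, P (v i) else 0) :=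
            (if_pos hc).symm
        _ ≤ ∑ m : Fin M,
              if c < mutualInfo (jointType v (g' m)) then ∏ i, P (v i) else 0 :=
            Finset.single_le_sum
              (f := fun m => if c < mutualInfo (jointType v (g' m)) then ∏ i, P (v i) else 0)
              (fun m _ => by by_cases h : c < mutualInfo (jointType v (g' m)) <;>
                simp [h, hnn v]) (Finset.mem_univ (f' v))
    · rw [if_neg hc]
      exact Finset.sum_nonneg fun m _ => by
        by_cases h : c < mutualInfo (jointType v (g' m)) <;> simp [h, hnn v]
  calc _ ≤ _ := step1
    _ ≤ ∑ _m : Fin M, ((n:ℝ) + 1) ^ (Fintype.card (X × Y)) * (2:ℝ) ^ (-(n:ℝ) * c) :=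
        Finset.sum_le_sum fun m _ => step2 m
    _ = (M : ℝ) * (((n:ℝ) + 1) ^ (Fintype.card (X × Y)) * (2:ℝ) ^ (-(n:ℝ) * c)) := by
        rw [Finset.sum_const, nsmul_eq_mul, Finset.card_univ, Fintype.card_fin]

end JT

section Prob
variable {X : Type*} [Fintype X] [Nonempty X]
    [MeasurableSpace X] [MeasurableSingletonClass X]
    {Ω : Type*} [MeasurableSpace Ω] {μ : MeasureTheory.Measure Ω}
    [MeasureTheory.IsProbabilityMeasure μ]
    {P : X → ℝ} {Xs : ℕ → Ω → X}

lemma prob_vec (hmeas : ∀ i, Measurable (Xs i))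
    (hindep : iIndepFun Xs μ)
    (hdist : ∀ i a, (μ {ω | Xs i ω = a}).toReal = P a)
    {n : ℕ} (v : Fin n → X) :
    (μ {ω | ∀ i : Fin n, Xs i ω = v i}).toReal = ∏ i : Fin n, P (v i) := by
  set v' : ℕ → X := fun i => if h : i < n then v ⟨i, h⟩ else Classical.arbitrary X with hv'
  have hset : {ω | ∀ i : Fin n, Xs i ω = v i}
      = ⋂ i ∈ Finset.range n, Xs i ⁻¹' {v' i} := by
    ext ω
    simp only [Set.mem_setOf_eq, Set.mem_iInter, Finset.mem_range, Set.mem_preimage,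
      Set.mem_singleton_iff]
    constructor
    · intro h i hi
      rw [hv']
      simp only [dif_pos hi]
      exact h ⟨i, hi⟩
    · intro h i
      have h2 := h i.1 i.2
      rw [hv'] at h2
      simp only [dif_pos i.2] at h2
      rw [h2]
  have hprod := (iIndepFun_iff_measure_inter_preimage_eq_mul.1 hindep)
    (Finset.range n) (sets := fun i => {v' i}) (fun i _ => measurableSet_singleton _)
  have hpre : ∀ (i : ℕ) (a : X), Xs i ⁻¹' ({a} : Set X) = {ω | Xs i ω = a} := by
    intro i a; ext ω; simp
  rw [hset, hprod, ENNReal.toReal_prod]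
  have h1 : ∀ i ∈ Finset.range n, (μ (Xs i ⁻¹' ({v' i} : Set X))).toReal = P (v' i) := by
    intro i _
    rw [hpre i (v' i), hdist i (v' i)]
  rw [Finset.prod_congr rfl h1, ← Fin.prod_univ_eq_prod_range (fun i => P (v' i)) n]
  apply Finset.prod_congr rfl
  intro i _
  rw [hv']
  simp only [dif_pos i.2]

lemma prob_event (hmeas : ∀ i, Measurable (Xs i))
    (hindep : iIndepFun Xs μ)
    (hdist : ∀ i a, (μ {ω | Xs i ω = a}).toReal = P a)
    {n : ℕ} (cond : (Fin n → X) → Prop) :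
    (μ {ω | cond (fun i : Fin n => Xs i ω)}).toReal
      = ∑ v ∈ Finset.univ.filter cond, ∏ i, P (v i) := by
  have hdecomp : {ω | cond (fun i : Fin n => Xs i ω)}
      = ⋃ v ∈ Finset.univ.filter cond, {ω | ∀ i : Fin n, Xs i ω = v i} := by
    ext ω
    simp only [Set.mem_setOf_eq, Set.mem_iUnion, Finset.mem_filter, Finset.mem_univ, true_and]
    constructor
    · intro h
      exact ⟨fun i => Xs i ω, h, fun i => rfl⟩
    · rintro ⟨v, hv, hvi⟩
      have : (fun i : Fin n => Xs i ω) = v := funext hvi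
      rwa [this]
  have hmeasA : ∀ v : Fin n → X, MeasurableSet {ω | ∀ i : Fin n, Xs i ω = v i} := by
    intro v
    have : {ω | ∀ i : Fin n, Xs i ω = v i} = ⋂ i : Fin n, Xs i ⁻¹' {v i} := by
      ext ω; simp
    rw [this]
    exact MeasurableSet.iInter fun i => (hmeas i) (measurableSet_singleton _)
  have hdisj : Set.PairwiseDisjoint (↑(Finset.univ.filter cond))
      (fun v : Fin n → X => {ω | ∀ i : Fin n, Xs i ω = v i}) := by
    intro v _ w _ hvw
    refine Set.disjoint_left.2 ?_
    intro ω hv hw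
    exact hvw (funext fun i => (hv i).symm.trans (hw i))
  rw [hdecomp, MeasureTheory.measure_biUnion_finset hdisj (fun v _ => hmeasA v),
    ENNReal.toReal_sum (fun v _ => MeasureTheory.measure_ne_top μ _)]
  exact Finset.sum_congr rfl fun v _ => prob_vec hmeas hindep hdist v

lemma meas_event (hmeas : ∀ i, Measurable (Xs i))
    {n : ℕ} (cond : (Fin n → X) → Prop) :
    MeasurableSet {ω | cond (fun i : Fin n => Xs i ω)} := by
  have hdecomp : {ω | cond (fun i : Fin n => Xs i ω)}
      = ⋃ v ∈ Finset.univ.filter cond, {ω | ∀ i : Fin n, Xs i ω = v i} := by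
    ext ω
    simp only [Set.mem_setOf_eq, Set.mem_iUnion, Finset.mem_filter, Finset.mem_univ, true_and]
    constructor
    · intro h
      exact ⟨fun i => Xs i ω, h, fun i => rfl⟩
    · rintro ⟨v, hv, hvi⟩
      have : (fun i : Fin n => Xs i ω) = v := funext hvi
      rwa [this]
  rw [hdecomp]
  apply Finset.measurableSet_biUnion
  intro v _
  have : {ω | ∀ i : Fin n, Xs i ω = v i} = ⋂ i : Fin n, Xs i ⁻¹' {v i} := by
    ext ω; simp
  rw [this]
  exact MeasurableSet.iInter fun i => (hmeas i) (measurableSet_singleton _)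

end Prob

lemma summable_bound (K : ℕ) {ε : ℝ} (hε : 0 < ε) :
    Summable (fun j : ℕ => (((j:ℝ) + 2) ^ K) * (2:ℝ) ^ (-(ε * ((j:ℝ) + 1)))) := by
  have hr0 : 0 < (2:ℝ)^(-ε) := Real.rpow_pos_of_pos two_pos _
  have hr1 : (2:ℝ)^(-ε) < 1 := Real.rpow_lt_one_of_one_lt_of_neg one_lt_two (neg_lt_zero.2 hε)
  have hsum : Summable (fun j : ℕ => ((j:ℝ)) ^ K * ((2:ℝ)^(-ε)) ^ j) :=
    summable_pow_mul_geometric_of_norm_lt_one K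
      (by rw [Real.norm_eq_abs, abs_of_pos hr0]; exact hr1)
  have h2 : Summable (fun j : ℕ => (((j+2:ℕ):ℝ)) ^ K * ((2:ℝ)^(-ε)) ^ (j+2)) :=
    (summable_nat_add_iff 2).2 hsum
  apply Summable.congr (h2.mul_left ((2:ℝ)^(-ε))⁻¹)
  intro j
  have hpow : (2:ℝ) ^ (-(ε * ((j:ℝ)+1))) = ((2:ℝ)^(-ε)) ^ (j+1) := by
    rw [← Real.rpow_natCast ((2:ℝ)^(-ε)) (j+1), ← Real.rpow_mul (le_of_lt two_pos)]
    congr 1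
    push_cast
    ring
  have hc : (((j+2:ℕ):ℝ)) = (j:ℝ)+2 := by push_cast; ring
  have hsplit : ((2:ℝ)^(-ε)) ^ (j+2) = ((2:ℝ)^(-ε)) * ((2:ℝ)^(-ε)) ^ (j+1) := by
    rw [pow_succ, pow_succ]
    ring
  rw [hc, hpow, hsplit]
  calc ((2:ℝ)^(-ε))⁻¹ * (((j:ℝ)+2)^K * (((2:ℝ)^(-ε)) * ((2:ℝ)^(-ε))^(j+1)))
      = (((2:ℝ)^(-ε))⁻¹ * ((2:ℝ)^(-ε))) * (((j:ℝ)+2)^K * ((2:ℝ)^(-ε))^(j+1)) := by ring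
    _ = ((j:ℝ)+2)^K * ((2:ℝ)^(-ε))^(j+1) := by rw [inv_mul_cancel₀ hr0.ne', one_mul]


/-- **Weissman–Ordentlich.** For `X₁, X₂, …` i.i.d. `P_X` and any sequence of
rate-`R` codes (encoders `f_n` into a message set of size `≤ 2^{nR}` and decoders
`g_n` into `𝒴^n`), the mutual information of the joint type of `(X^n, Y^n)`,
where `Y^n = g_n(f_n(X^n))`, satisfies `limsup_n I(T_{X^n Y^n}) ≤ R` a.s. -/
theorem limsup_joint_type_MI
    {X Y : Type*} [Fintype X] [Fintype Y] [Nonempty X] [Nonempty Y]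
    [MeasurableSpace X] [MeasurableSingletonClass X]
    {Ω : Type*} [MeasurableSpace Ω] (μ : Measure Ω) [IsProbabilityMeasure μ]
    (P : X → ℝ) (hP : IsPMF P)
    (Xs : ℕ → Ω → X) (hmeas : ∀ i, Measurable (Xs i))
    (hindep : iIndepFun Xs μ)
    (hdist : ∀ i a, (μ {ω | Xs i ω = a}).toReal = P a)
    (R : ℝ) (N : ℕ → ℕ) (hN : ∀ n : ℕ, (N n : ℝ) ≤ 2 ^ (R * n))
    (f : (n : ℕ) → (Fin n → X) → Fin (N n))
    (g : (n : ℕ) → Fin (N n) → (Fin n → Y)) :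
    ∀ᵐ ω ∂μ,
      Filter.limsup (fun n : ℕ =>
          mutualInfo (jointType (fun i : Fin n => Xs i ω)
            (g n (f n (fun i : Fin n => Xs i ω))))) atTop ≤ R := by
  set K := Fintype.card (X × Y) with hK
  have key : ∀ k : ℕ, ∀ᵐ ω ∂μ, ∀ᶠ n in atTop,
      ¬ (R + 1/((k:ℝ)+1) < mutualInfo (jointType (fun i : Fin n => Xs i ω)
          (g n (f n (fun i : Fin n => Xs i ω))))) := by
    intro k
    set ε : ℝ := 1/((k:ℝ)+1) with hεdef
    have hε : 0 < ε := by positivity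
    set s : ℕ → Set Ω := fun j => {ω | R + ε < mutualInfo (jointType
        (fun i : Fin (j+1) => Xs i ω)
        (g (j+1) (f (j+1) (fun i : Fin (j+1) => Xs i ω))))} with hs
    set b : ℕ → ℝ := fun j => (((j:ℝ)+2)^K) * (2:ℝ)^(-(ε * ((j:ℝ)+1))) with hb
    have hmb : ∀ j : ℕ, μ (s j) ≤ ENNReal.ofReal (b j) := by
      intro j
      have heq : (μ (s j)).toReal = ∑ v ∈ Finset.univ.filter
          (fun v : Fin (j+1) → X =>
            R + ε < mutualInfo (jointType v (g (j+1) (f (j+1) v)))),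
          ∏ i, P (v i) :=
        prob_event hmeas hindep hdist
          (fun v : Fin (j+1) → X =>
            R + ε < mutualInfo (jointType v (g (j+1) (f (j+1) v))))
      have hle := code_bound (n := j+1) (Nat.succ_pos j) hP (g (j+1)) (f (j+1)) (R + ε)
      have hNb := hN (j+1)
      have hchain : (μ (s j)).toReal ≤ b j := by
        rw [heq]
        refine le_trans hle ?_
        have hnn2 : (0:ℝ) ≤ ((((j+1:ℕ)):ℝ)+1)^K * (2:ℝ)^(-(((j+1:ℕ)):ℝ)*(R+ε)) := by
          positivity
        refine le_trans (mul_le_mul_of_nonneg_right hNb hnn2) ?_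
        have hc : (((j+1:ℕ)):ℝ) = (j:ℝ)+1 := by push_cast; ring
        rw [hc]
        have hexp : (2:ℝ)^(R * ((j:ℝ)+1)) * (2:ℝ)^(-((j:ℝ)+1)*(R+ε))
            = (2:ℝ)^(-(ε * ((j:ℝ)+1))) := by
          rw [← Real.rpow_add two_pos]
          congr 1
          ring
        calc (2:ℝ)^(R * ((j:ℝ)+1)) * ((((j:ℝ)+1)+1)^K * (2:ℝ)^(-((j:ℝ)+1)*(R+ε)))
            = (((j:ℝ)+2)^K) * ((2:ℝ)^(R * ((j:ℝ)+1)) * (2:ℝ)^(-((j:ℝ)+1)*(R+ε))) := by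
              ring_nf
          _ = (((j:ℝ)+2)^K) * (2:ℝ)^(-(ε * ((j:ℝ)+1))) := by rw [hexp]
          _ ≤ b j := le_refl _
      calc μ (s j) = ENNReal.ofReal ((μ (s j)).toReal) :=
            (ENNReal.ofReal_toReal (measure_ne_top μ _)).symm
        _ ≤ ENNReal.ofReal (b j) := ENNReal.ofReal_le_ofReal hchain
    have hb0 : ∀ j, 0 ≤ b j := fun j => by
      rw [hb]
      positivity
    have hbsum : Summable b := summable_bound K hε
    have hsum : (∑' j, μ (s j)) ≠ ⊤ := by
      have h1 : ∑' j, μ (s j) ≤ ∑' j, ENNReal.ofReal (b j) := ENNReal.tsum_le_tsum hmb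
      rw [← ENNReal.ofReal_tsum_of_nonneg hb0 hbsum] at h1
      exact ne_top_of_le_ne_top ENNReal.ofReal_ne_top h1
    have hBC := MeasureTheory.ae_eventually_notMem (μ := μ) hsum
    filter_upwards [hBC] with ω hω
    rw [eventually_atTop] at hω ⊢
    obtain ⟨a, ha⟩ := hω
    refine ⟨a+2, fun n hn => ?_⟩
    have h := ha (n-1) (by omega)
    have hmem : ω ∉ s (n-1) := h
    rw [hs] at hmem
    simp only [Set.mem_setOf_eq] at hmem
    have hn1 : n - 1 + 1 = n := by omega
    rw [hn1] at hmem
    exact hmem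
  have hall := (MeasureTheory.ae_all_iff).2 key
  filter_upwards [hall] with ω hω
  set F : ℕ → ℝ := fun n => mutualInfo (jointType (fun i : Fin n => Xs i ω)
    (g n (f n (fun i : Fin n => Xs i ω)))) with hF
  have hbd : IsBoundedUnder (· ≥ ·) atTop F :=
    ⟨0, eventually_map.2 (Eventually.of_forall fun n => mutualInfo_jointType_nonneg _ _)⟩
  have hco : IsCoboundedUnder (· ≤ ·) atTop F := hbd.isCoboundedUnder_le
  have hlim : ∀ k : ℕ, limsup F atTop ≤ R + 1/((k:ℝ)+1) := by
    intro k
    apply limsup_le_of_le hco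
    exact (hω k).mono (fun n hn => not_lt.1 hn)
  have htend : Tendsto (fun k : ℕ => R + 1/((k:ℝ)+1)) atTop (nhds R) := by
    have h0 : Tendsto (fun k : ℕ => 1/((k:ℝ)+1)) atTop (nhds 0) :=
      tendsto_one_div_add_atTop_nhds_zero_nat
    have h1 := (tendsto_const_nhds (x := R) (f := atTop (α := ℕ))).add h0
    simpa using h1
  exact ge_of_tendsto' htend hlim
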